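/- In the higher tetrahedral algebra Λ = Λ(m,λ), any two paths of length 3 between two distinct vertices i ≠ j of Q are equal and non-zero in Λ. In particular, δηβ = δξσ = νμσ = νωβ (all paths of length 3 from vertex 1 to vertex 2 are equal). -/

import Mathlib

open scoped TensorProduct

namespace HigherTetrahedral

/-- The twelve arrows of the tetrahedral triangulation quiver. -/
inductive Arr : Type
  | nu | de | ep | rh | si | al | ga | be | xi | et | om | mu
  deriving DecidableEq

instance : Fintype Arr :=
  ⟨{.nu, .de, .ep, .rh, .si, .al, .ga, .be, .xi, .et, .om, .mu}, fun x => by cases x <;> decide⟩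

open Arr

/-- Source vertex of each arrow (vertex `v` is `⟨v-1⟩ : Fin 6`). -/
def src : Arr → Fin 6
  | nu => 0 | de => 0 | ep => 1 | rh => 1 | si => 2 | al => 2
  | ga => 3 | be => 3 | xi => 4 | et => 4 | om => 5 | mu => 5

/-- Target vertex of each arrow. -/
def tgt : Arr → Fin 6
  | nu => 5 | de => 4 | ep => 4 | rh => 5 | si => 1 | al => 0
  | ga => 0 | be => 1 | xi => 2 | et => 3 | om => 3 | mu => 2

/-- The permutation `f` of arrows, with orbits (δ η γ), (ε ξ σ), (ρ ω β), (ν μ α). -/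
def f : Arr → Arr
  | de => et | et => ga | ga => de
  | ep => xi | xi => si | si => ep
  | rh => om | om => be | be => rh
  | nu => mu | mu => al | al => nu

/-- The permutation `g`: `g θ` is the arrow starting at `tgt θ` other than `f θ`. -/
def g : Arr → Arr
  | de => xi | et => be | ga => nu
  | ep => et | xi => al | si => rh
  | rh => mu | om => ga | be => ep
  | nu => om | mu => si | al => de

variable (K : Type) [Field K]

/-- The ambient free algebra on the vertices and arrows. -/
abbrev FreeTet := FreeAlgebra K ((Fin 6) ⊕ Arr)

/-- Generator corresponding to a vertex. -/
def V (i : Fin 6) : FreeTet K := FreeAlgebra.ι K (Sum.inl i)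

/-- Generator corresponding to an arrow. -/
def A (θ : Arr) : FreeTet K := FreeAlgebra.ι K (Sum.inr θ)

variable (m : ℕ) (lam : K)

/-- The defining relations of the higher tetrahedral algebra `Λ(m,λ)`, together with
the path-algebra relations for the vertex idempotents. -/
inductive TetRel : FreeTet K → FreeTet K → Prop
  | idem (i j : Fin 6) : TetRel (V K i * V K j) (if i = j then V K i else 0)
  | sum_one : TetRel (∑ i : Fin 6, V K i) 1
  | src_tgt (θ : Arr) : TetRel (V K (src θ) * A K θ * V K (tgt θ)) (A K θ)
  | rel_ga : TetRel (A K ga * A K de)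
      (A K be * A K ep + lam • ((A K be * A K rh * A K om) ^ (m - 1) * (A K be * A K ep)))
  | rel_rh : TetRel (A K rh * A K om)
      (A K ep * A K et + lam • ((A K ep * A K xi * A K si) ^ (m - 1) * (A K ep * A K et)))
  | rel_xi : TetRel (A K xi * A K si)
      (A K et * A K be + lam • ((A K et * A K ga * A K de) ^ (m - 1) * (A K et * A K be)))
  | rel_de : TetRel (A K de * A K et) (A K nu * A K om)
  | rel_om : TetRel (A K om * A K be) (A K mu * A K si)
  | rel_si : TetRel (A K si * A K ep) (A K al * A K de)
  | rel_et : TetRel (A K et * A K ga) (A K xi * A K al)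
  | rel_be : TetRel (A K be * A K rh) (A K ga * A K nu)
  | rel_ep : TetRel (A K ep * A K xi) (A K rh * A K mu)
  | rel_nu : TetRel (A K nu * A K mu) (A K de * A K xi)
  | rel_mu : TetRel (A K mu * A K al) (A K om * A K ga)
  | rel_al : TetRel (A K al * A K nu) (A K si * A K rh)
  | zero_rel (θ : Arr) : TetRel
      ((A K θ * A K (f θ) * A K (f (f θ))) ^ (m - 1) * (A K θ * A K (f θ)) * A K (g (f θ))) 0

/-- The higher tetrahedral algebra `Λ(m,λ)`. -/
abbrev Tet := RingQuot (TetRel K m lam)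

/-- The idempotent of `Λ(m,λ)` at a vertex. -/
def e (i : Fin 6) : Tet K m lam := RingQuot.mkAlgHom K (TetRel K m lam) (V K i)

/-- The image in `Λ(m,λ)` of an arrow. -/
def a (θ : Arr) : Tet K m lam := RingQuot.mkAlgHom K (TetRel K m lam) (A K θ)

/-- The elements `X_i` (vertex `i+1` in the paper's numbering):
`X₁ = δηγ`, `X₂ = ρωβ`, `X₃ = ανμ`, `X₄ = γδη`, `X₅ = ηγδ`, `X₆ = ωβρ`. -/
def X : Fin 6 → Tet K m lam
  | 0 => a K m lam de * a K m lam et * a K m lam ga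
  | 1 => a K m lam rh * a K m lam om * a K m lam be
  | 2 => a K m lam al * a K m lam nu * a K m lam mu
  | 3 => a K m lam ga * a K m lam de * a K m lam et
  | 4 => a K m lam et * a K m lam ga * a K m lam de
  | 5 => a K m lam om * a K m lam be * a K m lam rh

/-- Product in `Λ(m,λ)` of a list of arrows (a path, read left to right). -/
def pathProd (l : List Arr) : Tet K m lam := (l.map (a K m lam)).prod

/-- `IsPath i j l` : the list of arrows `l` is a (composable) path from vertex `i`
to vertex `j`. -/
def IsPath (i j : Fin 6) (l : List Arr) : Prop :=
  l ≠ [] ∧ l.Chain' (fun x y => tgt x = src y) ∧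
    (∀ h : l ≠ [], src (l.head h) = i ∧ tgt (l.getLast h) = j)

end HigherTetrahedral

/-!
Equality: the four paths of length 3 from a vertex to the opposite one are connected by the
commutativity relations, multiplied by one more arrow. The three deformed relations
(`γδ`, `ρω`, `ξσ`) can be used as well, because once multiplied by the neighbouring arrow their
`λ`-term contains a zero relation `(θ f(θ) f²(θ))^{m-1} θ f(θ) g(f(θ))`.

Non-vanishing: over `R = K[t]/(t⁴)`, sending vertex `i` to the matrix unit `E_ii` and arrow `θ`
to `t · E_{src θ, tgt θ}` respects all relations when `m ≥ 2` (every `λ`-term and zero relation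
becomes a multiple of `t^{3m-1}`), while a path of length 3 goes to `t³ E ≠ 0`.
-/

lemma Matrix.single_pow_mul_single {n α : Type*} [Fintype n] [DecidableEq n] [Semiring α]
    (i j : n) (c d : α) (k : ℕ) :
    single i i c ^ k * single i j d = single i j (c ^ k * d) := by
  induction k with
  | zero => simp
  | succ k ih =>
    rw [pow_succ', mul_assoc, ih, single_mul_single_same, ← mul_assoc, ← pow_succ']

open Polynomial in
lemma Polynomial.mk_X_pow_eq_zero_iff {K : Type*} [Field K] {k n : ℕ} :
    Ideal.Quotient.mk (Ideal.span {X ^ k}) (X : K[X]) ^ n = 0 ↔ k ≤ n := by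
  rw [← map_pow, Ideal.Quotient.eq_zero_iff_mem, Ideal.mem_span_singleton,
    pow_dvd_pow_iff X_ne_zero not_isUnit_X]

namespace HigherTetrahedral

open Arr

lemma pathProd_triple {K : Type} [Field K] {m : ℕ} {lam : K} (x y z : Arr) :
    pathProd K m lam [x, y, z] = a K m lam x * a K m lam y * a K m lam z := by
  simp only [pathProd, List.map_cons, List.map_nil, List.prod_cons, List.prod_nil, mul_one,
    mul_assoc]

lemma IsPath.exists_eq_triple {i j : Fin 6} {l : List Arr} (hl : IsPath i j l)
    (h3 : l.length = 3) :
    ∃ x y z, l = [x, y, z] ∧ tgt x = src y ∧ tgt y = src z ∧ src x = i ∧ tgt z = j := by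
  match l, h3, hl with
  | [x, y, z], _, ⟨_, hchain, hends⟩ =>
    rw [List.Chain', List.isChain_cons_cons, List.isChain_cons_cons] at hchain
    obtain ⟨hxy, hyz, -⟩ := hchain
    obtain ⟨hx, hz⟩ := hends (List.cons_ne_nil _ _)
    exact ⟨x, y, z, rfl, hxy, hyz, hx, hz⟩

section Relations

variable {K : Type} [Field K] {m : ℕ} {lam : K}

local notation "𝐚" => a K m lam

lemma a_mul_a_eq {x y u v : Arr} (h : TetRel K m lam (A K x * A K y) (A K u * A K v)) :
    𝐚 x * 𝐚 y = 𝐚 u * 𝐚 v := by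
  simpa only [a, map_mul] using RingQuot.mkAlgHom_rel K h

def correction (θ : Arr) : Tet K m lam :=
  (𝐚 θ * 𝐚 (f θ) * 𝐚 (f (f θ))) ^ (m - 1) * (𝐚 θ * 𝐚 (g θ))

lemma a_mul_a_eq_add_correction {p q θ : Arr}
    (h : TetRel K m lam (A K p * A K q) (A K θ * A K (g θ) +
      lam • ((A K θ * A K (f θ) * A K (f (f θ))) ^ (m - 1) * (A K θ * A K (g θ))))) :
    𝐚 p * 𝐚 q = 𝐚 θ * 𝐚 (g θ) + lam • correction θ := by
  simpa only [a, correction, map_mul, map_add, map_smul, map_pow] using RingQuot.mkAlgHom_rel K h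

lemma zero_relation (θ : Arr) :
    (𝐚 θ * 𝐚 (f θ) * 𝐚 (f (f θ))) ^ (m - 1) * (𝐚 θ * 𝐚 (f θ)) * 𝐚 (g (f θ)) = 0 := by
  simpa only [a, map_mul, map_pow, map_zero] using RingQuot.mkAlgHom_rel K (TetRel.zero_rel θ)

lemma f_f_f (θ : Arr) : f (f (f θ)) = θ := by
  cases θ <;> rfl

lemma a_mul_correction_eq_zero (θ : Arr) : 𝐚 (f (f θ)) * correction θ = 0 := by
  have h := zero_relation (K := K) (m := m) (lam := lam) (f (f θ))
  rw [f_f_f] at h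
  rw [correction, ← mul_assoc, ← mul_pow_mul]
  simpa only [mul_assoc] using h

lemma correction_mul_a_eq_zero {θ x : Arr} (h : 𝐚 (g θ) * 𝐚 x = 𝐚 (f θ) * 𝐚 (g (f θ))) :
    correction θ * 𝐚 x = 0 := by
  rw [correction, mul_assoc _ (𝐚 θ * 𝐚 (g θ)), mul_assoc (𝐚 θ) (𝐚 (g θ)), h]
  simpa only [mul_assoc] using zero_relation θ

lemma mul_deformed_rel {p q θ : Arr}
    (h : 𝐚 p * 𝐚 q = 𝐚 θ * 𝐚 (g θ) + lam • correction θ) :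
    𝐚 (f (f θ)) * 𝐚 p * 𝐚 q = 𝐚 (f (f θ)) * 𝐚 θ * 𝐚 (g θ) := by
  rw [mul_assoc, h, mul_add, mul_smul_comm, a_mul_correction_eq_zero, smul_zero, add_zero,
    ← mul_assoc]

lemma deformed_rel_mul {p q θ x : Arr}
    (h : 𝐚 p * 𝐚 q = 𝐚 θ * 𝐚 (g θ) + lam • correction θ)
    (hx : 𝐚 (g θ) * 𝐚 x = 𝐚 (f θ) * 𝐚 (g (f θ))) :
    𝐚 p * 𝐚 q * 𝐚 x = 𝐚 θ * 𝐚 (g θ) * 𝐚 x := by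
  rw [h, add_mul, smul_mul_assoc, correction_mul_a_eq_zero hx, smul_zero, add_zero]

lemma paths_from_one :
    𝐚 de * 𝐚 xi * 𝐚 si = 𝐚 de * 𝐚 et * 𝐚 be ∧ 𝐚 nu * 𝐚 mu * 𝐚 si = 𝐚 de * 𝐚 et * 𝐚 be ∧
      𝐚 nu * 𝐚 om * 𝐚 be = 𝐚 de * 𝐚 et * 𝐚 be := by
  have h : 𝐚 de * 𝐚 xi * 𝐚 si = 𝐚 de * 𝐚 et * 𝐚 be :=
    mul_deformed_rel (a_mul_a_eq_add_correction .rel_xi)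
  exact ⟨h, by rw [a_mul_a_eq .rel_nu, h], by rw [← a_mul_a_eq .rel_de]⟩

lemma paths_from_two :
    𝐚 ep * 𝐚 xi * 𝐚 al = 𝐚 ep * 𝐚 et * 𝐚 ga ∧ 𝐚 rh * 𝐚 mu * 𝐚 al = 𝐚 ep * 𝐚 et * 𝐚 ga ∧
      𝐚 rh * 𝐚 om * 𝐚 ga = 𝐚 ep * 𝐚 et * 𝐚 ga := by
  have h : 𝐚 ep * 𝐚 xi * 𝐚 al = 𝐚 ep * 𝐚 et * 𝐚 ga := by
    rw [mul_assoc, ← a_mul_a_eq .rel_et, mul_assoc]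
  exact ⟨h, by rw [← a_mul_a_eq .rel_ep, h],
    deformed_rel_mul (a_mul_a_eq_add_correction .rel_rh) (a_mul_a_eq .rel_et)⟩

lemma paths_from_three :
    𝐚 al * 𝐚 de * 𝐚 et = 𝐚 si * 𝐚 ep * 𝐚 et ∧ 𝐚 si * 𝐚 rh * 𝐚 om = 𝐚 si * 𝐚 ep * 𝐚 et ∧
      𝐚 al * 𝐚 nu * 𝐚 om = 𝐚 si * 𝐚 ep * 𝐚 et := by
  have h : 𝐚 si * 𝐚 rh * 𝐚 om = 𝐚 si * 𝐚 ep * 𝐚 et :=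
    mul_deformed_rel (a_mul_a_eq_add_correction .rel_rh)
  exact ⟨by rw [← a_mul_a_eq .rel_si], h, by rw [a_mul_a_eq .rel_al, h]⟩

lemma paths_from_four :
    𝐚 ga * 𝐚 nu * 𝐚 mu = 𝐚 ga * 𝐚 de * 𝐚 xi ∧ 𝐚 be * 𝐚 ep * 𝐚 xi = 𝐚 ga * 𝐚 de * 𝐚 xi ∧
      𝐚 be * 𝐚 rh * 𝐚 mu = 𝐚 ga * 𝐚 de * 𝐚 xi := by
  have h : 𝐚 ga * 𝐚 de * 𝐚 xi = 𝐚 be * 𝐚 ep * 𝐚 xi :=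
    deformed_rel_mul (a_mul_a_eq_add_correction .rel_ga) (a_mul_a_eq .rel_ep)
  exact ⟨by rw [mul_assoc, a_mul_a_eq .rel_nu, mul_assoc], h.symm,
    by rw [mul_assoc, ← a_mul_a_eq .rel_ep, ← mul_assoc, h]⟩

lemma paths_from_five :
    𝐚 et * 𝐚 ga * 𝐚 nu = 𝐚 et * 𝐚 be * 𝐚 rh ∧ 𝐚 xi * 𝐚 si * 𝐚 rh = 𝐚 et * 𝐚 be * 𝐚 rh ∧
      𝐚 xi * 𝐚 al * 𝐚 nu = 𝐚 et * 𝐚 be * 𝐚 rh := by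
  have h : 𝐚 xi * 𝐚 si * 𝐚 rh = 𝐚 et * 𝐚 be * 𝐚 rh :=
    deformed_rel_mul (a_mul_a_eq_add_correction .rel_xi) (a_mul_a_eq .rel_be)
  exact ⟨by rw [mul_assoc, ← a_mul_a_eq .rel_be, mul_assoc], h,
    by rw [mul_assoc, a_mul_a_eq .rel_al, ← mul_assoc, h]⟩

lemma paths_from_six :
    𝐚 om * 𝐚 ga * 𝐚 de = 𝐚 om * 𝐚 be * 𝐚 ep ∧ 𝐚 mu * 𝐚 al * 𝐚 de = 𝐚 om * 𝐚 be * 𝐚 ep ∧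
      𝐚 mu * 𝐚 si * 𝐚 ep = 𝐚 om * 𝐚 be * 𝐚 ep := by
  have h : 𝐚 om * 𝐚 ga * 𝐚 de = 𝐚 om * 𝐚 be * 𝐚 ep :=
    mul_deformed_rel (a_mul_a_eq_add_correction .rel_ga)
  exact ⟨h, by rw [a_mul_a_eq .rel_mu, h],
    by rw [mul_assoc, a_mul_a_eq .rel_si, ← mul_assoc, a_mul_a_eq .rel_mu, h]⟩

def canonPath : Fin 6 → Tet K m lam
  | 0 => 𝐚 de * 𝐚 et * 𝐚 be
  | 1 => 𝐚 ep * 𝐚 et * 𝐚 ga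
  | 2 => 𝐚 si * 𝐚 ep * 𝐚 et
  | 3 => 𝐚 ga * 𝐚 de * 𝐚 xi
  | 4 => 𝐚 et * 𝐚 be * 𝐚 rh
  | 5 => 𝐚 om * 𝐚 be * 𝐚 ep

lemma a_mul_a_mul_a_eq_canonPath {x y z : Arr} (hxy : tgt x = src y) (hyz : tgt y = src z)
    (hxz : src x ≠ tgt z) : 𝐚 x * 𝐚 y * 𝐚 z = canonPath (src x) := by
  cases x <;> cases y <;> (try exact absurd hxy (by decide)) <;>
    cases z <;> (try exact absurd hyz (by decide)) <;> (try exact absurd rfl hxz) <;>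
    simp only [src, canonPath, paths_from_one, paths_from_two, paths_from_three,
      paths_from_four, paths_from_five, paths_from_six]

lemma pathProd_eq_canonPath {i j : Fin 6} (hij : i ≠ j) {l : List Arr} (hl : IsPath i j l)
    (h3 : l.length = 3) : pathProd K m lam l = canonPath i := by
  obtain ⟨x, y, z, rfl, hxy, hyz, rfl, rfl⟩ := hl.exists_eq_triple h3
  rw [pathProd_triple, a_mul_a_mul_a_eq_canonPath hxy hyz hij]

end Relations

section MatrixModel

open Matrix

variable (K : Type) [Field K] {R : Type*} [Semiring R] [Algebra K R] (t : R)

noncomputable def freeRep : FreeTet K →ₐ[K] Matrix (Fin 6) (Fin 6) R :=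
  FreeAlgebra.lift K (Sum.elim (fun i => single i i 1) fun θ => single (src θ) (tgt θ) t)

lemma freeRep_V (i : Fin 6) : freeRep K t (V K i) = single i i 1 := by
  simp [freeRep, V]

lemma freeRep_A (θ : Arr) : freeRep K t (A K θ) = single (src θ) (tgt θ) t := by
  simp [freeRep, A]

lemma freeRep_rel {m : ℕ} {lam : K} (ht : t ^ (3 * (m - 1) + 2) = 0) {x y : FreeTet K}
    (h : TetRel K m lam x y) : freeRep K t x = freeRep K t y := by
  have ht' : (t * t * t) ^ (m - 1) * (t * t) = 0 := by
    rwa [← pow_three', ← pow_two, ← pow_mul, ← pow_add]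
  induction h with
  | idem i j =>
    rw [map_mul, freeRep_V, freeRep_V]
    split_ifs with hij
    · rw [hij, single_mul_single_same, mul_one, freeRep_V]
    · rw [single_mul_single_of_ne (h := hij), map_zero]
  | sum_one => simp only [map_sum, freeRep_V, sum_single_one, map_one]
  | zero_rel θ =>
    cases θ <;> simp [freeRep_A, src, tgt, f, g, single_mul_single_same, single_pow_mul_single, ht']
  | _ => simp [freeRep_A, freeRep_V, src, tgt, single_mul_single_same, single_pow_mul_single, ht']

noncomputable def rep {m : ℕ} {lam : K} (ht : t ^ (3 * (m - 1) + 2) = 0) :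
    Tet K m lam →ₐ[K] Matrix (Fin 6) (Fin 6) R :=
  RingQuot.liftAlgHom K ⟨freeRep K t, fun _ _ => freeRep_rel K t ht⟩

lemma rep_a {m : ℕ} {lam : K} (ht : t ^ (3 * (m - 1) + 2) = 0) (θ : Arr) :
    rep K t ht (a K m lam θ) = single (src θ) (tgt θ) t := by
  rw [a, rep, RingQuot.liftAlgHom_mkAlgHom_apply, freeRep_A]

end MatrixModel

lemma a_mul_a_mul_a_ne_zero {K : Type} [Field K] {m : ℕ} {lam : K} (hm : 2 ≤ m) {x y z : Arr}
    (hxy : tgt x = src y) (hyz : tgt y = src z) :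
    a K m lam x * a K m lam y * a K m lam z ≠ 0 := by
  set t := Ideal.Quotient.mk (Ideal.span {Polynomial.X ^ 4}) (Polynomial.X : Polynomial K)
  have ht : t ^ (3 * (m - 1) + 2) = 0 := Polynomial.mk_X_pow_eq_zero_iff.2 (by omega)
  have ht3 : t * t * t ≠ 0 := by
    rw [← pow_three', Ne, Polynomial.mk_X_pow_eq_zero_iff]
    omega
  intro h
  have hrep := congrArg (rep K t ht) h
  rw [map_mul, map_mul, rep_a, rep_a, rep_a, ← hxy, Matrix.single_mul_single_same, ← hyz,
    Matrix.single_mul_single_same, map_zero] at hrep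
  exact ht3 (by simpa using congrFun (congrFun hrep (src x)) (tgt z))

lemma pathProd_ne_zero {K : Type} [Field K] {m : ℕ} {lam : K} (hm : 2 ≤ m) {i j : Fin 6}
    {l : List Arr} (hl : IsPath i j l) (h3 : l.length = 3) : pathProd K m lam l ≠ 0 := by
  obtain ⟨x, y, z, rfl, hxy, hyz, -, -⟩ := hl.exists_eq_triple h3
  rw [pathProd_triple]
  exact a_mul_a_mul_a_ne_zero hm hxy hyz

end HigherTetrahedral


open HigherTetrahedral Arr in
/-- In `Λ(m,λ)`, any two paths of length `3` between two distinct vertices are equal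
and non-zero; in particular `δηβ = δξσ = νμσ = νωβ`. -/
theorem paths_length_three (K : Type) [Field K] (m : ℕ) (hm : 2 ≤ m) (lam : K) :
    (∀ (i j : Fin 6), i ≠ j → ∀ l l' : List Arr,
      IsPath i j l → l.length = 3 → IsPath i j l' → l'.length = 3 →
        pathProd K m lam l = pathProd K m lam l' ∧ pathProd K m lam l ≠ 0) ∧
    a K m lam de * a K m lam et * a K m lam be = a K m lam de * a K m lam xi * a K m lam si ∧
    a K m lam de * a K m lam xi * a K m lam si = a K m lam nu * a K m lam mu * a K m lam si ∧
    a K m lam nu * a K m lam mu * a K m lam si = a K m lam nu * a K m lam om * a K m lam be := by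
  refine ⟨fun i j hij l l' hl h3 hl' h3' => ⟨?_, pathProd_ne_zero hm hl h3⟩, ?_⟩
  · rw [pathProd_eq_canonPath hij hl h3, pathProd_eq_canonPath hij hl' h3']
  · obtain ⟨h₁, h₂, h₃⟩ := paths_from_one (K := K) (m := m) (lam := lam)
    exact ⟨h₁.symm, h₁.trans h₂.symm, h₂.trans h₃.symm⟩
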